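/- Let E be an order-continuous Banach lattice or a Köthe function space. Then E is upper locally uniformly monotone if and only if its complexification E^ℂ is locally uniformly complex convex. -/

import Mathlib

open MeasureTheory

/-- A (Köthe-style) Banach function lattice over an index set `α`:
an ideal of real-valued functions with a complete lattice norm. -/
structure BanachFunctionSpace (α : Type*) where
  Mem : (α → ℝ) → Prop
  N : (α → ℝ) → ℝ
  zero_mem : Mem 0
  add_mem : ∀ f g, Mem f → Mem g → Mem (f + g)
  smul_mem : ∀ (c : ℝ) f, Mem f → Mem (c • f)
  solid : ∀ f g, (∀ a, |f a| ≤ |g a|) → Mem g → Mem f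
  norm_nonneg : ∀ f, 0 ≤ N f
  norm_eq_zero : ∀ f, Mem f → (N f = 0 ↔ f = 0)
  norm_add_le : ∀ f g, Mem f → Mem g → N (f + g) ≤ N f + N g
  norm_smul : ∀ (c : ℝ) f, N (c • f) = |c| * N f
  norm_mono : ∀ f g, (∀ a, |f a| ≤ |g a|) → Mem g → N f ≤ N g
  complete : ∀ u : ℕ → (α → ℝ), (∀ n, Mem (u n)) →
    (∀ ε : ℝ, 0 < ε → ∃ N₀, ∀ m ≥ N₀, ∀ n ≥ N₀, N (u m - u n) < ε) →
    ∃ f, Mem f ∧ ∀ ε : ℝ, 0 < ε → ∃ N₀, ∀ n ≥ N₀, N (u n - f) < ε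

/-- Membership in the complexification `E^ℂ`. -/
def BanachFunctionSpace.MemC {α : Type*} (E : BanachFunctionSpace α)
    (f : α → ℂ) : Prop :=
  E.Mem (fun a => ‖f a‖)

/-- The norm of the complexification `E^ℂ`. -/
noncomputable def BanachFunctionSpace.NC {α : Type*} (E : BanachFunctionSpace α)
    (f : α → ℂ) : ℝ :=
  E.N (fun a => ‖f a‖)

/-- `E` is upper locally uniformly monotone: for some `1 ≤ p < ∞`, for each unit
`f` and each `ε > 0`, `inf{‖(|f|^p + |g|^p)^{1/p}‖ − 1 : ‖g‖ ≥ ε} > 0`. -/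
def BanachFunctionSpace.UpperLocallyUniformlyMonotone {α : Type*}
    (E : BanachFunctionSpace α) : Prop :=
  ∃ p : ℝ, 1 ≤ p ∧ ∀ f, E.Mem f → E.N f = 1 → ∀ ε : ℝ, 0 < ε →
    ∃ δ : ℝ, 0 < δ ∧ ∀ g, E.Mem g → ε ≤ E.N g →
      1 + δ ≤ E.N (fun a => (|f a| ^ p + |g a| ^ p) ^ (1 / p))

/-- The complexification `E^ℂ` is locally uniformly complex convex: every unit
vector is a complex strongly extreme point. -/
noncomputable def BanachFunctionSpace.LocallyUniformlyComplexConvex {α : Type*}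
    (E : BanachFunctionSpace α) : Prop :=
  ∀ f : α → ℂ, E.MemC f → E.NC f = 1 → ∀ ε : ℝ, 0 < ε →
    ∃ δ : ℝ, 0 < δ ∧ ∀ g : α → ℂ, E.MemC g → ε ≤ E.NC g →
      1 + δ ≤ (2 * Real.pi)⁻¹ *
        ∫ θ in (0 : ℝ)..(2 * Real.pi),
          E.NC (fun a => f a + Complex.exp (θ * Complex.I) * g a)


open Complex in
lemma pair_ineq (a : ℝ) (u : ℂ) :
    2 * Real.sqrt (a ^ 2 + u.im ^ 2) ≤ ‖↑a + u‖ + ‖↑a - u‖ := by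
  have h1 : ((2 * a : ℝ) : ℂ) + (2 * u.im : ℝ) * I = (↑a + u) + (starRingEnd ℂ) (↑a - u) := by
    have := Complex.sub_conj u
    rw [map_sub, Complex.conj_ofReal]
    push_cast at this ⊢
    linear_combination -this
  have h2 : ‖(↑(2 * a : ℝ)) + (↑(2 * u.im : ℝ)) * I‖
      = Real.sqrt ((2 * a) ^ 2 + (2 * u.im) ^ 2) := Complex.norm_add_mul_I _ _
  have h3 : Real.sqrt ((2 * a) ^ 2 + (2 * u.im) ^ 2) = 2 * Real.sqrt (a ^ 2 + u.im ^ 2) := by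
    rw [show (2 * a) ^ 2 + (2 * u.im) ^ 2 = 2 ^ 2 * (a ^ 2 + u.im ^ 2) by ring,
      Real.sqrt_mul (by positivity), Real.sqrt_sq (by norm_num)]
  calc 2 * Real.sqrt (a ^ 2 + u.im ^ 2)
      = ‖(↑a + u) + (starRingEnd ℂ) (↑a - u)‖ := by
        rw [← h1]; push_cast at h2 ⊢; rw [h2, h3]
    _ ≤ ‖↑a + u‖ + ‖(starRingEnd ℂ) (↑a - u)‖ := norm_add_le _ _
    _ = ‖↑a + u‖ + ‖↑a - u‖ := by rw [Complex.norm_conj]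

open Complex in
lemma four_pt (x w : ℂ) :
    2 * ‖x‖ + 2 * Real.sqrt ((‖x‖) ^ 2 + (‖w‖) ^ 2 / 2)
      ≤ ‖x + w‖ + ‖x - w‖
        + ‖x + I * w‖ + ‖x - I * w‖ := by
  rcases eq_or_ne x 0 with rfl | hx
  · simp only [norm_zero, zero_add, zero_sub, norm_neg, mul_zero,
      norm_mul, Complex.norm_I, one_mul]
    have h1 : Real.sqrt ((0:ℝ) ^ 2 + (‖w‖) ^ 2 / 2) ≤ ‖w‖ := by
      rw [show (0:ℝ) ^ 2 + (‖w‖) ^ 2 / 2 = (‖w‖) ^ 2 / 2 by ring]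
      calc Real.sqrt ((‖w‖) ^ 2 / 2) ≤ Real.sqrt ((‖w‖) ^ 2) := by
            apply Real.sqrt_le_sqrt; nlinarith [norm_nonneg w]
        _ = ‖w‖ := Real.sqrt_sq (norm_nonneg w)
    have := norm_nonneg w
    nlinarith
  · set a := ‖x‖ with ha
    have hapos : 0 < a := norm_pos_iff.mpr hx
    set c : ℂ := (starRingEnd ℂ) x / ↑a with hc
    have hcabs : ‖c‖ = 1 := by
      rw [hc, norm_div, Complex.norm_conj, Complex.norm_real, Real.norm_eq_abs, abs_of_pos hapos, div_self hapos.ne']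
    have hcx : c * x = ↑a := by
      rw [hc, div_mul_eq_mul_div, mul_comm, Complex.mul_conj, Complex.normSq_eq_norm_sq, ← ha]
      have hane : (a:ℂ) ≠ 0 := by exact_mod_cast hapos.ne'
      push_cast
      rw [sq, mul_div_assoc, div_self hane, mul_one]
    set u : ℂ := c * w with hu
    have hub : ‖u‖ = ‖w‖ := by
      rw [hu, norm_mul, hcabs, one_mul]
    have key : ∀ z : ℂ, ‖x + z‖ = ‖↑a + c * z‖ := by
      intro z
      rw [← hcx, ← mul_add, norm_mul, hcabs, one_mul]
    have key' : ∀ z : ℂ, ‖x - z‖ = ‖↑a - c * z‖ := by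
      intro z
      rw [← hcx, ← mul_sub, norm_mul, hcabs, one_mul]
    rw [key w, key' w, key (I * w), key' (I * w)]
    have e1 : c * (I * w) = I * u := by rw [hu]; ring
    rw [e1]
    have p1 := pair_ineq a u
    have p2 := pair_ineq a (I * u)
    have him : (I * u).im = u.re := by simp
    rw [him] at p2
    have hsum : u.re ^ 2 + u.im ^ 2 = (‖w‖) ^ 2 := by
      rw [← hub, Complex.sq_norm, Complex.normSq_apply]; ring
    have final : 2 * a + 2 * Real.sqrt (a ^ 2 + (‖w‖) ^ 2 / 2)
        ≤ 2 * Real.sqrt (a ^ 2 + u.im ^ 2) + 2 * Real.sqrt (a ^ 2 + u.re ^ 2) := by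
      have hb2 : (0:ℝ) ≤ (‖w‖) ^ 2 / 2 := by positivity
      rcases le_total ((‖w‖) ^ 2 / 2) (u.im ^ 2) with h | h
      · have s1 : Real.sqrt (a ^ 2 + (‖w‖) ^ 2 / 2) ≤ Real.sqrt (a ^ 2 + u.im ^ 2) :=
          Real.sqrt_le_sqrt (by linarith)
        have s2 : a ≤ Real.sqrt (a ^ 2 + u.re ^ 2) := by
          have h0 := Real.sqrt_nonneg (a ^ 2 + u.re ^ 2)
          have h1 := Real.sq_sqrt (show (0:ℝ) ≤ a ^ 2 + u.re ^ 2 by positivity)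
          nlinarith [sq_nonneg u.re]
        nlinarith [s1, s2]
      · have h' : (‖w‖) ^ 2 / 2 ≤ u.re ^ 2 := by nlinarith
        have s1 : Real.sqrt (a ^ 2 + (‖w‖) ^ 2 / 2) ≤ Real.sqrt (a ^ 2 + u.re ^ 2) :=
          Real.sqrt_le_sqrt (by linarith)
        have s2 : a ≤ Real.sqrt (a ^ 2 + u.im ^ 2) := by
          have h0 := Real.sqrt_nonneg (a ^ 2 + u.im ^ 2)
          have h1 := Real.sq_sqrt (show (0:ℝ) ≤ a ^ 2 + u.im ^ 2 by positivity)
          nlinarith [sq_nonneg u.im]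
        nlinarith [s1, s2]
    linarith [p1, p2, final]

open Complex in
lemma abs_exp_mul_I_sub (s t : ℝ) :
    ‖Complex.exp (↑s * I) - Complex.exp (↑t * I)‖ ≤ |s - t| := by
  have factor : Complex.exp (↑s * I) - Complex.exp (↑t * I)
      = Complex.exp (↑t * I) * (Complex.exp (↑(s - t) * I) - 1) := by
    rw [mul_sub, ← Complex.exp_add, mul_one]
    push_cast
    ring_nf
  rw [factor, norm_mul, Complex.norm_exp_ofReal_mul_I, one_mul]
  set r : ℝ := s - t with hr
  clear_value r
  have hexp : Complex.exp (↑r * I) - 1 = ↑(Real.cos r - 1) + ↑(Real.sin r) * I := by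
    rw [Complex.exp_mul_I, ← Complex.ofReal_cos, ← Complex.ofReal_sin]
    push_cast
    ring
  rw [hexp, Complex.norm_add_mul_I]
  have hsin : Real.sin (r / 2) ^ 2 ≤ (r / 2) ^ 2 := by
    have := Real.abs_sin_le_abs (x := r / 2)
    nlinarith [abs_nonneg (Real.sin (r/2)), abs_nonneg (r/2), _root_.sq_abs (Real.sin (r/2)), _root_.sq_abs (r/2)]
  have hcos : (Real.cos r - 1) ^ 2 + Real.sin r ^ 2 = 2 - 2 * Real.cos r := by
    nlinarith [Real.sin_sq_add_cos_sq r]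
  have hhalf : Real.sin (r / 2) ^ 2 = (1 - Real.cos r) / 2 := by
    have := Real.abs_sin_half r
    have h2 : |Real.sin (r/2)| ^ 2 = (1 - Real.cos r) / 2 := by
      rw [this]; exact Real.sq_sqrt (by nlinarith [Real.cos_le_one r])
    rwa [_root_.sq_abs] at h2
  have hq : (r / 2) ^ 2 = r ^ 2 / 4 := by ring
  have hle : (Real.cos r - 1) ^ 2 + Real.sin r ^ 2 ≤ r ^ 2 := by
    rw [hcos]; rw [hq] at hsin; linarith [hsin, hhalf]
  calc Real.sqrt ((Real.cos r - 1) ^ 2 + Real.sin r ^ 2) ≤ Real.sqrt (r ^ 2) :=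
        Real.sqrt_le_sqrt hle
    _ = |r| := Real.sqrt_sq_eq_abs r

lemma rpow_sum_le {A B p : ℝ} (hA : 0 ≤ A) (hB : 0 ≤ B) (hp : 1 ≤ p) :
    (A ^ p + B ^ p) ^ (1 / p) ≤ A + B := by
  have h := NNReal.rpow_add_rpow_le_add A.toNNReal B.toNNReal hp
  have h2 := NNReal.coe_le_coe.mpr h
  rw [NNReal.coe_rpow, NNReal.coe_add, NNReal.coe_rpow, NNReal.coe_rpow, NNReal.coe_add,
    Real.coe_toNNReal A hA, Real.coe_toNNReal B hB] at h2
  exact h2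


lemma exp_pi_div_two_mul_I' : Complex.exp (↑(Real.pi / 2) * Complex.I) = Complex.I := by
  rw [Complex.exp_mul_I, ← Complex.ofReal_cos, ← Complex.ofReal_sin,
    Real.cos_pi_div_two, Real.sin_pi_div_two]
  simp


namespace BanachFunctionSpace
variable {α : Type*} (E : BanachFunctionSpace α)

lemma N_abs (f : α → ℝ) (hf : E.Mem f) : E.N (fun x => |f x|) = E.N f := by
  apply le_antisymm
  · exact E.norm_mono _ f (fun x => by simp) hf
  · exact E.norm_mono f _ (fun x => by simp) (E.solid _ f (fun x => by simp) hf)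

lemma mem_h (f g : α → ℂ) (hf : E.MemC f) (hg : E.MemC g) (w : ℂ) (hw : ‖w‖ ≤ 1) :
    E.Mem (fun x => ‖f x + w * g x‖) := by
  refine E.solid _ ((fun x => ‖f x‖) + fun x => ‖g x‖) (fun x => ?_)
    (E.add_mem _ _ hf hg)
  simp only [Pi.add_apply]
  rw [abs_of_nonneg (_root_.norm_nonneg _), abs_of_nonneg (by positivity)]
  calc ‖f x + w * g x‖ ≤ ‖f x‖ + ‖w * g x‖ :=
        _root_.norm_add_le _ _
    _ ≤ ‖f x‖ + ‖g x‖ := by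
        rw [norm_mul]
        nlinarith [_root_.norm_nonneg (g x), _root_.norm_nonneg w]

lemma G_cont (f g : α → ℂ) (hf : E.MemC f) (hg : E.MemC g) :
    Continuous (fun θ : ℝ => E.NC (fun x => f x + Complex.exp (↑θ * Complex.I) * g x)) := by
  set b : α → ℝ := fun x => ‖g x‖ with hb
  have hmemb : E.Mem b := hg
  have key : ∀ s t : ℝ, E.NC (fun x => f x + Complex.exp (↑s * Complex.I) * g x)
      ≤ E.NC (fun x => f x + Complex.exp (↑t * Complex.I) * g x) + |s - t| * E.N b := by
    intro s t
    have pt : ∀ x, |‖f x + Complex.exp (↑s * Complex.I) * g x‖|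
        ≤ |(‖f x + Complex.exp (↑t * Complex.I) * g x‖ + |s - t| * b x)| := by
      intro x
      rw [abs_of_nonneg (_root_.norm_nonneg _), abs_of_nonneg (by positivity)]
      have : f x + Complex.exp (↑s * Complex.I) * g x
          = (f x + Complex.exp (↑t * Complex.I) * g x)
            + (Complex.exp (↑s * Complex.I) - Complex.exp (↑t * Complex.I)) * g x := by ring
      rw [this]
      calc ‖_‖ ≤ ‖f x + Complex.exp (↑t * Complex.I) * g x‖
            + ‖(Complex.exp (↑s * Complex.I) - Complex.exp (↑t * Complex.I)) * g x‖ :=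
            _root_.norm_add_le _ _
        _ ≤ _ := by
            rw [norm_mul]
            have h1 := abs_exp_mul_I_sub s t
            have h2 := _root_.norm_nonneg (g x)
            have h3 := abs_nonneg (s - t)
            gcongr
    have hm1 : E.Mem (fun x => ‖f x + Complex.exp (↑t * Complex.I) * g x‖) :=
      E.mem_h f g hf hg _ (by rw [Complex.norm_exp_ofReal_mul_I])
    have hm2 : E.Mem (fun x => |s - t| * b x) := E.smul_mem |s - t| b hmemb
    have step1 : E.NC (fun x => f x + Complex.exp (↑s * Complex.I) * g x)
        ≤ E.N ((fun x => ‖f x + Complex.exp (↑t * Complex.I) * g x‖)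
            + fun x => |s - t| * b x) := by
      apply E.norm_mono _ _ (fun x => pt x) (E.add_mem _ _ hm1 hm2)
    refine step1.trans ?_
    refine (E.norm_add_le _ _ hm1 hm2).trans ?_
    have : E.N (fun x => |s - t| * b x) = |s - t| * E.N b := by
      have : (fun x => |s - t| * b x) = |s - t| • b := by funext x; simp [Pi.smul_apply, smul_eq_mul]
      rw [this, E.norm_smul, abs_abs]
    rw [this]
    show E.N _ + _ ≤ E.N _ + _
    exact le_rfl
  apply LipschitzWith.continuous (K := Real.toNNReal (E.N b))
  apply LipschitzWith.of_dist_le_mul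
  intro s t
  rw [Real.dist_eq, Real.dist_eq, Real.coe_toNNReal _ (E.norm_nonneg b)]
  rw [abs_sub_le_iff]
  constructor
  · have := key s t
    nlinarith [abs_nonneg (s - t), E.norm_nonneg b, abs_sub_comm s t]
  · have := key t s
    rw [abs_sub_comm t s] at this
    nlinarith


lemma reverse (h : E.LocallyUniformlyComplexConvex) : E.UpperLocallyUniformlyMonotone := by
  refine ⟨1, le_rfl, ?_⟩
  intro f hf hf1 ε hε
  set fC : α → ℂ := fun x => (f x : ℂ) with hfC
  have habsf : (fun x => ‖fC x‖) = fun x => |f x| := by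
    funext x; simp [hfC]
  have hmemfC : E.MemC fC := by
    show E.Mem _
    rw [habsf]
    exact E.solid _ f (by simp) hf
  have hNfC : E.NC fC = 1 := by
    show E.N _ = 1
    rw [habsf, E.N_abs f hf, hf1]
  obtain ⟨δ, hδ, Hδ⟩ := h fC hmemfC hNfC ε hε
  refine ⟨δ, hδ, ?_⟩
  intro g hg hNg
  set gC : α → ℂ := fun x => (g x : ℂ) with hgC
  have habsg : (fun x => ‖gC x‖) = fun x => |g x| := by funext x; simp [hgC]
  have hmemgC : E.MemC gC := by show E.Mem _; rw [habsg]; exact E.solid _ g (by simp) hg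
  have hNgC : ε ≤ E.NC gC := by show ε ≤ E.N _; rw [habsg, E.N_abs g hg]; exact hNg
  have H := Hδ gC hmemgC hNgC
  set C : α → ℝ := fun x => |f x| + |g x| with hC
  have hmemC : E.Mem C := E.add_mem _ _ (E.solid _ f (by simp) hf) (E.solid _ g (by simp) hg)
  have hbound : ∀ θ : ℝ, E.NC (fun x => fC x + Complex.exp (↑θ * Complex.I) * gC x) ≤ E.N C := by
    intro θ
    apply E.norm_mono _ _ _ hmemC
    intro x
    rw [abs_of_nonneg (_root_.norm_nonneg _)]
    have h1 : ‖fC x + Complex.exp (↑θ * Complex.I) * gC x‖ ≤ |f x| + |g x| := by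
      calc ‖fC x + Complex.exp (↑θ * Complex.I) * gC x‖
          ≤ ‖fC x‖ + ‖Complex.exp (↑θ * Complex.I) * gC x‖ :=
            _root_.norm_add_le _ _
        _ = |f x| + |g x| := by
            rw [norm_mul, Complex.norm_exp_ofReal_mul_I, one_mul]
            simp [hfC, hgC]
    exact h1.trans (le_abs_self _)
  have hInt : IntervalIntegrable
      (fun θ : ℝ => E.NC (fun x => fC x + Complex.exp (↑θ * Complex.I) * gC x))
      volume 0 (2 * Real.pi) :=
    (E.G_cont fC gC hmemfC hmemgC).intervalIntegrable _ _
  have h2π : (0:ℝ) < 2 * Real.pi := by positivity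
  have hIle : (∫ θ in (0:ℝ)..(2 * Real.pi),
      E.NC (fun x => fC x + Complex.exp (↑θ * Complex.I) * gC x)) ≤ (2 * Real.pi) * E.N C := by
    calc (∫ θ in (0:ℝ)..(2 * Real.pi),
        E.NC (fun x => fC x + Complex.exp (↑θ * Complex.I) * gC x))
        ≤ ∫ _ in (0:ℝ)..(2 * Real.pi), E.N C := by
          apply intervalIntegral.integral_mono_on h2π.le hInt intervalIntegrable_const
          exact fun θ _ => hbound θ
      _ = (2 * Real.pi) * E.N C := by
          rw [intervalIntegral.integral_const, smul_eq_mul]; ring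
  have hfinal : 1 + δ ≤ E.N C := by
    have h2 : (2 * Real.pi)⁻¹ * (∫ θ in (0:ℝ)..(2 * Real.pi),
        E.NC (fun x => fC x + Complex.exp (↑θ * Complex.I) * gC x)) ≤ E.N C := by
      rw [inv_mul_le_iff₀ h2π]
      calc (∫ θ in (0:ℝ)..(2 * Real.pi),
          E.NC (fun x => fC x + Complex.exp (↑θ * Complex.I) * gC x))
          ≤ (2 * Real.pi) * E.N C := hIle
        _ = 2 * Real.pi * E.N C := by ring
    exact H.trans h2
  have hfun : (fun x => (|f x| ^ (1:ℝ) + |g x| ^ (1:ℝ)) ^ (1 / (1:ℝ))) = C := by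
    funext x
    norm_num [Real.rpow_one, hC]
  rw [hfun]
  exact hfinal


set_option maxHeartbeats 1600000 in
lemma forward (h : E.UpperLocallyUniformlyMonotone) : E.LocallyUniformlyComplexConvex := by
  obtain ⟨p, hp, H⟩ := h
  intro f hf hf1 ε hε
  set a : α → ℝ := fun x => ‖f x‖ with ha
  have hmema : E.Mem a := hf
  have hNa : E.N a = 1 := hf1
  have hann : ∀ x, 0 ≤ a x := fun x => _root_.norm_nonneg _
  set lam : ℝ := min ε 1 / 2 with hlam
  have hlampos : 0 < lam := by
    have h1 : 0 < min ε 1 := lt_min hε one_pos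
    rw [hlam]; linarith
  have hlamle1 : lam ≤ 1 / 2 := by
    rw [hlam]; have := min_le_right ε 1; linarith
  have hlamleε : lam ≤ ε / 2 := by
    rw [hlam]; have := min_le_left ε 1; linarith
  set ε₂ : ℝ := lam / 16 * (ε / 2) with hε₂
  obtain ⟨δ, hδ, Hδ⟩ := H a hmema hNa ε₂ (by rw [hε₂]; positivity)
  refine ⟨δ, hδ, ?_⟩
  intro g hg hNg
  set b : α → ℝ := fun x => ‖g x‖ with hb
  have hmemb : E.Mem b := hg
  have hbnn : ∀ x, 0 ≤ b x := fun x => _root_.norm_nonneg _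
  have hNb : ε ≤ E.N b := hNg
  -- the truncated part of b
  set b₂ : α → ℝ := fun x => if lam * a x ≤ b x then b x else 0 with hb₂
  have hb₂nn : ∀ x, 0 ≤ b₂ x := by
    intro x; rw [hb₂]; dsimp only; split
    · exact hbnn x
    · exact le_rfl
  have hmemb₂ : E.Mem b₂ := by
    apply E.solid _ b _ hmemb
    intro x
    rw [hb₂]; dsimp only; split
    · exact le_rfl
    · rw [abs_zero]; exact abs_nonneg _
  have hNb₂ : ε / 2 ≤ E.N b₂ := by
    have hdom : ∀ x, |b x| ≤ |(b₂ + lam • a) x| := by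
      intro x
      simp only [Pi.add_apply, Pi.smul_apply, smul_eq_mul]
      have hnn : 0 ≤ b₂ x + lam * a x := by
        have := mul_nonneg hlampos.le (hann x); linarith [hb₂nn x]
      rw [abs_of_nonneg (hbnn x), abs_of_nonneg hnn]
      rw [hb₂]; dsimp only; split
      · nlinarith [mul_nonneg hlampos.le (hann x)]
      · next hcond => push_neg at hcond; linarith
    have h1 : E.N b ≤ E.N (b₂ + lam • a) :=
      E.norm_mono _ _ hdom (E.add_mem _ _ hmemb₂ (E.smul_mem lam a hmema))
    have h2 : E.N (b₂ + lam • a) ≤ E.N b₂ + lam := by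
      have h3 := E.norm_add_le b₂ (lam • a) hmemb₂ (E.smul_mem lam a hmema)
      rw [E.norm_smul, hNa, abs_of_pos hlampos, mul_one] at h3
      exact h3
    linarith
  set u : α → ℝ := (lam / 16) • b₂ with hu
  have hunn : ∀ x, 0 ≤ u x := by
    intro x; rw [hu]; simp only [Pi.smul_apply, smul_eq_mul]
    exact mul_nonneg (by linarith) (hb₂nn x)
  have hmemu : E.Mem u := E.smul_mem _ _ hmemb₂
  have hNu : ε₂ ≤ E.N u := by
    rw [hu, E.norm_smul, abs_of_pos (by linarith), hε₂]
    have : ε / 2 ≤ E.N b₂ := hNb₂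
    nlinarith
  have Hkey := Hδ u hmemu hNu
  -- pointwise bound for the p-expression
  have hpe : ∀ x, (|a x| ^ p + |u x| ^ p) ^ (1 / p) ≤ a x + u x := by
    intro x
    rw [abs_of_nonneg (hann x), abs_of_nonneg (hunn x)]
    exact rpow_sum_le (hann x) (hunn x) hp
  set G : ℝ → ℝ := fun θ => E.NC (fun x => f x + Complex.exp (↑θ * Complex.I) * g x) with hG
  have h2π : (0:ℝ) < 2 * Real.pi := by positivity
  -- the key inequality for each θ
  have key : ∀ θ : ℝ, 1 + δ ≤
      (1/4) * (G θ + G (θ + Real.pi) + G (θ + Real.pi / 2) + G (θ + 3 * Real.pi / 2)) := by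
    intro θ
    set w : ℂ := Complex.exp (↑θ * Complex.I) with hw
    have hwabs : ‖w‖ = 1 := Complex.norm_exp_ofReal_mul_I θ
    set K : ℂ → α → ℝ := fun w' x => ‖f x + w' * g x‖ with hK
    -- pointwise geometric inequality
    have hpt : ∀ x, a x + u x ≤
        (1/4) * (K w x + K (-w) x + K (Complex.I * w) x + K (-(Complex.I * w)) x) := by
      intro x
      have h4 := four_pt (f x) (w * g x)
      have habsw : ‖w * g x‖ = b x := by
        rw [norm_mul, hwabs, one_mul, hb]
      rw [habsw] at h4
      rw [show ‖f x‖ = a x from rfl] at h4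
      have hk1 : K (-w) x = ‖f x - w * g x‖ := by
        rw [hK]; dsimp only; rw [show f x + -w * g x = f x - w * g x by ring]
      have hk2 : K (Complex.I * w) x = ‖f x + Complex.I * (w * g x)‖ := by
        rw [hK]; dsimp only; rw [mul_assoc]
      have hk3 : K (-(Complex.I * w)) x = ‖f x - Complex.I * (w * g x)‖ := by
        rw [hK]; dsimp only
        rw [show f x + -(Complex.I * w) * g x = f x - Complex.I * (w * g x) by ring]
      have hk0 : K w x = ‖f x + w * g x‖ := rfl
      rw [hk0, hk1, hk2, hk3]
      by_cases hcond : lam * a x ≤ b x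
      · have hux : u x = lam / 16 * b x := by
          rw [hu]; simp only [Pi.smul_apply, smul_eq_mul]
          rw [hb₂]; dsimp only; rw [if_pos hcond]
        have hsq : (a x + lam / 8 * b x) ^ 2 ≤ (a x) ^ 2 + (b x) ^ 2 / 2 := by
          nlinarith [mul_le_mul_of_nonneg_right hcond (hbnn x), hann x, hbnn x,
            hlampos.le, hlamle1, sq_nonneg (b x), mul_nonneg (hann x) (hbnn x),
            mul_le_mul_of_nonneg_left hlamle1 hlampos.le,
            mul_nonneg hlampos.le (mul_nonneg (hann x) (hbnn x))]
        have hs : a x + lam / 8 * b x ≤ Real.sqrt ((a x) ^ 2 + (b x) ^ 2 / 2) := by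
          rw [Real.le_sqrt (add_nonneg (hann x) (mul_nonneg (by linarith) (hbnn x)))
            (by positivity)]
          exact hsq
        rw [hux]
        linarith [h4, hs]
      · have hux : u x = 0 := by
          rw [hu]; simp only [Pi.smul_apply, smul_eq_mul]
          rw [hb₂]; dsimp only; rw [if_neg hcond, mul_zero]
        have hs : a x ≤ Real.sqrt ((a x) ^ 2 + (b x) ^ 2 / 2) := by
          rw [Real.le_sqrt (hann x) (by positivity)]
          nlinarith [sq_nonneg (b x)]
        rw [hux]
        linarith [h4, hs]
    -- memberships of the four pieces
    have hmemK : ∀ w' : ℂ, ‖w'‖ = 1 → E.Mem (K w') := by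
      intro w' hw'
      exact E.mem_h f g hf hg w' hw'.le
    have habsneg : ‖-w‖ = 1 := by rw [norm_neg, hwabs]
    have habsI : ‖Complex.I * w‖ = 1 := by
      rw [norm_mul, Complex.norm_I, hwabs, one_mul]
    have habsnegI : ‖-(Complex.I * w)‖ = 1 := by
      rw [norm_neg, habsI]
    have hm0 := hmemK w hwabs
    have hm1 := hmemK (-w) habsneg
    have hm2 := hmemK (Complex.I * w) habsI
    have hm3 := hmemK (-(Complex.I * w)) habsnegI
    -- norm chain
    have hchain1 : E.N (fun x => (|a x| ^ p + |u x| ^ p) ^ (1 / p))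
        ≤ E.N ((1/4 : ℝ) • (K w + K (-w) + K (Complex.I * w) + K (-(Complex.I * w)))) := by
      apply E.norm_mono
      · intro x
        simp only [Pi.smul_apply, Pi.add_apply, smul_eq_mul]
        have hnn1 : (0:ℝ) ≤ (|a x| ^ p + |u x| ^ p) ^ (1 / p) := by positivity
        have hnn2 : (0:ℝ) ≤ K w x + K (-w) x + K (Complex.I * w) x + K (-(Complex.I * w)) x := by
          have := _root_.norm_nonneg (f x + w * g x)
          have := _root_.norm_nonneg (f x + (-w) * g x)
          have := _root_.norm_nonneg (f x + (Complex.I * w) * g x)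
          have := _root_.norm_nonneg (f x + (-(Complex.I * w)) * g x)
          rw [hK]; dsimp only; linarith
        rw [abs_of_nonneg hnn1, abs_of_nonneg (by linarith : (0:ℝ) ≤ 1/4 * (K w x + K (-w) x + K (Complex.I * w) x + K (-(Complex.I * w)) x))]
        calc (|a x| ^ p + |u x| ^ p) ^ (1 / p) ≤ a x + u x := hpe x
          _ ≤ (1/4) * (K w x + K (-w) x + K (Complex.I * w) x + K (-(Complex.I * w)) x) := hpt x
      · exact E.smul_mem _ _ (E.add_mem _ _ (E.add_mem _ _ (E.add_mem _ _ hm0 hm1) hm2) hm3)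
    have hchain2 : E.N ((1/4 : ℝ) • (K w + K (-w) + K (Complex.I * w) + K (-(Complex.I * w))))
        ≤ (1/4) * (E.N (K w) + E.N (K (-w)) + E.N (K (Complex.I * w)) + E.N (K (-(Complex.I * w)))) := by
      rw [E.norm_smul, abs_of_pos (by norm_num : (0:ℝ) < 1/4)]
      have t1 := E.norm_add_le (K w + K (-w) + K (Complex.I * w)) (K (-(Complex.I * w)))
        (E.add_mem _ _ (E.add_mem _ _ hm0 hm1) hm2) hm3
      have t2 := E.norm_add_le (K w + K (-w)) (K (Complex.I * w)) (E.add_mem _ _ hm0 hm1) hm2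
      have t3 := E.norm_add_le (K w) (K (-w)) hm0 hm1
      nlinarith
    -- identify the four norms with values of G
    have e_pi : Complex.exp (↑(θ + Real.pi) * Complex.I) = -w := by
      rw [show ((θ + Real.pi : ℝ) : ℂ) * Complex.I
          = ↑θ * Complex.I + ↑Real.pi * Complex.I by push_cast; ring,
        Complex.exp_add, Complex.exp_pi_mul_I, hw]
      ring
    have e_pi2 : Complex.exp (↑(θ + Real.pi / 2) * Complex.I) = Complex.I * w := by
      rw [show ((θ + Real.pi / 2 : ℝ) : ℂ) * Complex.I
          = ↑θ * Complex.I + ↑(Real.pi / 2) * Complex.I by push_cast; ring,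
        Complex.exp_add, exp_pi_div_two_mul_I', hw]
      ring
    have e_pi3 : Complex.exp (↑(θ + 3 * Real.pi / 2) * Complex.I) = -(Complex.I * w) := by
      rw [show ((θ + 3 * Real.pi / 2 : ℝ) : ℂ) * Complex.I
          = ↑θ * Complex.I + ↑Real.pi * Complex.I + ↑(Real.pi / 2) * Complex.I by push_cast; ring,
        Complex.exp_add, Complex.exp_add, Complex.exp_pi_mul_I, exp_pi_div_two_mul_I', hw]
      ring
    have g0 : G θ = E.N (K w) := by
      rw [hG]; rfl
    have g1 : G (θ + Real.pi) = E.N (K (-w)) := by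
      rw [hG]
      show E.N _ = E.N _
      congr 1
      funext x
      rw [e_pi]
    have g2 : G (θ + Real.pi / 2) = E.N (K (Complex.I * w)) := by
      rw [hG]
      show E.N _ = E.N _
      congr 1
      funext x
      rw [e_pi2]
    have g3 : G (θ + 3 * Real.pi / 2) = E.N (K (-(Complex.I * w))) := by
      rw [hG]
      show E.N _ = E.N _
      congr 1
      funext x
      rw [e_pi3]
    rw [g0, g1, g2, g3]
    calc (1:ℝ) + δ ≤ E.N (fun x => (|a x| ^ p + |u x| ^ p) ^ (1 / p)) := Hkey
      _ ≤ _ := hchain1.trans hchain2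
  -- integrate the key inequality
  have hGcont : Continuous G := E.G_cont f g hf hg
  have hGper : Function.Periodic G (2 * Real.pi) := by
    intro s
    rw [hG]
    show E.N _ = E.N _
    congr 1
    funext x
    congr 2
    rw [show ((s + 2 * Real.pi : ℝ) : ℂ) * Complex.I
        = ↑s * Complex.I + 2 * ↑Real.pi * Complex.I by push_cast; ring,
      Complex.exp_add, Complex.exp_two_pi_mul_I, mul_one]
  have hint : IntervalIntegrable G volume 0 (2 * Real.pi) := hGcont.intervalIntegrable _ _
  have hintshift : ∀ s : ℝ, IntervalIntegrable (fun θ => G (θ + s)) volume 0 (2 * Real.pi) :=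
    fun s => (hGcont.comp (continuous_id.add continuous_const)).intervalIntegrable _ _
  have hshift : ∀ s : ℝ, (∫ θ in (0:ℝ)..(2 * Real.pi), G (θ + s))
      = ∫ θ in (0:ℝ)..(2 * Real.pi), G θ := by
    intro s
    rw [intervalIntegral.integral_comp_add_right G s]
    have h1 := hGper.intervalIntegral_add_eq s 0
    rw [zero_add] at h1
    rw [show (0:ℝ) + s = s by ring, show 2 * Real.pi + s = s + 2 * Real.pi by ring]
    exact h1
  have hmono : (2 * Real.pi) * (1 + δ) ≤ ∫ θ in (0:ℝ)..(2 * Real.pi),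
      (1/4) * (G θ + G (θ + Real.pi) + G (θ + Real.pi / 2) + G (θ + 3 * Real.pi / 2)) := by
    have hconst : (2 * Real.pi) * (1 + δ) = ∫ _ in (0:ℝ)..(2 * Real.pi), (1 + δ) := by
      rw [intervalIntegral.integral_const, smul_eq_mul]; ring
    rw [hconst]
    apply intervalIntegral.integral_mono_on h2π.le intervalIntegrable_const
    · apply IntervalIntegrable.const_mul
      exact ((hint.add (hintshift Real.pi)).add (hintshift (Real.pi/2))).add
        (hintshift (3 * Real.pi / 2))
    · exact fun θ _ => key θ
  have hval : (∫ θ in (0:ℝ)..(2 * Real.pi),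
      (1/4) * (G θ + G (θ + Real.pi) + G (θ + Real.pi / 2) + G (θ + 3 * Real.pi / 2)))
      = ∫ θ in (0:ℝ)..(2 * Real.pi), G θ := by
    rw [intervalIntegral.integral_const_mul]
    rw [intervalIntegral.integral_add ((hint.add (hintshift Real.pi)).add (hintshift (Real.pi/2)))
      (hintshift (3 * Real.pi / 2))]
    rw [intervalIntegral.integral_add (hint.add (hintshift Real.pi)) (hintshift (Real.pi/2))]
    rw [intervalIntegral.integral_add hint (hintshift Real.pi)]
    rw [hshift Real.pi, hshift (Real.pi/2), hshift (3 * Real.pi / 2)]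
    ring
  rw [hval] at hmono
  have hfin : 1 + δ ≤ (2 * Real.pi)⁻¹ * ∫ θ in (0:ℝ)..(2 * Real.pi), G θ := by
    rw [inv_mul_eq_div, le_div_iff₀ h2π]
    linarith
  exact hfin


end BanachFunctionSpace

theorem stmt18 {α : Type*} (E : BanachFunctionSpace α) :
    E.UpperLocallyUniformlyMonotone ↔ E.LocallyUniformlyComplexConvex := by
  exact ⟨E.forward, E.reverse⟩
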